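/- Let f be a non-negative integral circulation on a finite connected graph G with cycle rank r. Suppose every unit cycle flow contained in f appears with multiplicity one (f is elementary). Then f is the sum of at most r distinct non-negative unit cycle flows. -/

import Mathlib

open Finset

/-- Flow conservation at every vertex: an integral circulation on a graph whose
edges are given a reference orientation by `src` and `tgt`. -/
def IsCirculation {V E : Type} [Fintype E] [DecidableEq V] (src tgt : E → V) (f : E → ℤ) : Prop :=
  ∀ v : V, ∑ e : E, (if tgt e = v then f e else 0) = ∑ e : E, (if src e = v then f e else 0)

/-- Two vertices are adjacent via an edge in `S` (edges viewed as undirected). -/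
def EdgeAdj {V E : Type} (src tgt : E → V) (S : Set E) (a b : V) : Prop :=
  ∃ e ∈ S, (src e = a ∧ tgt e = b) ∨ (src e = b ∧ tgt e = a)

/-- Reachability using only edges in `S`. -/
def Reach {V E : Type} (src tgt : E → V) (S : Set E) : V → V → Prop :=
  Relation.ReflTransGen (EdgeAdj src tgt S)

/-- The (multi)graph is connected. -/
def GraphConnected {V E : Type} (src tgt : E → V) : Prop :=
  ∀ a b : V, Reach src tgt Set.univ a b

/-- `v` is an endpoint of some edge in `S`. -/
def Touches {V E : Type} (src tgt : E → V) (S : Set E) (v : V) : Prop :=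
  ∃ e ∈ S, src e = v ∨ tgt e = v

/-- The edge set `S` induces a connected subgraph (on the vertices it touches). -/
def ConnectedOn {V E : Type} (src tgt : E → V) (S : Set E) : Prop :=
  ∀ a b : V, Touches src tgt S a → Touches src tgt S b → Reach src tgt S a b

/-- Degree of `v` in the support of `f` (loops counted twice). -/
def suppDegree {V E : Type} [Fintype E] [DecidableEq V] (src tgt : E → V) (f : E → ℤ) (v : V) : ℕ :=
  (univ.filter fun e => f e ≠ 0 ∧ src e = v).card +
  (univ.filter fun e => f e ≠ 0 ∧ tgt e = v).card

/-- A cycle flow: a circulation whose support forms a single (undirected) cycle.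
The support is nonempty, connected, and every vertex it touches has degree 2 in it. -/
def IsCycleFlow {V E : Type} [Fintype E] [DecidableEq V] (src tgt : E → V) (f : E → ℤ) : Prop :=
  IsCirculation src tgt f ∧ (∃ e, f e ≠ 0) ∧
    ConnectedOn src tgt {e | f e ≠ 0} ∧
    ∀ v : V, Touches src tgt {e | f e ≠ 0} v → suppDegree src tgt f v = 2

/-- A unit cycle flow: a cycle flow with values in `{-1, 0, 1}`. -/
def IsUnitCycleFlow {V E : Type} [Fintype E] [DecidableEq V] (src tgt : E → V) (f : E → ℤ) : Prop :=
  IsCycleFlow src tgt f ∧ ∀ e, f e = 0 ∨ f e = 1 ∨ f e = -1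

/-- `f` contains `g`: on every edge, `|g e| ≤ |f e|` and they have the same sign
whenever `g e ≠ 0`. -/
def FlowContains {E : Type} (f g : E → ℤ) : Prop :=
  ∀ e, |g e| ≤ |f e| ∧ (g e ≠ 0 → 0 < g e * f e)

/-- A circulation is elementary if it does not contain twice a unit cycle flow. -/
def IsElementary {V E : Type} [Fintype E] [DecidableEq V] (src tgt : E → V) (f : E → ℤ) : Prop :=
  ¬ ∃ C : E → ℤ, IsUnitCycleFlow src tgt C ∧ FlowContains f (fun e => 2 * C e)

/-- `T` is a spanning tree: its edges connect all vertices and `|T| = |V| - 1`. -/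
def IsSpanningTree {V E : Type} [Fintype V] [Fintype E] [DecidableEq V] [DecidableEq E]
    (src tgt : E → V) (T : Finset E) : Prop :=
  (∀ a b : V, Reach src tgt ↑T a b) ∧ T.card + 1 = Fintype.card V

/-- Number of connected components of the subgraph on all of `V` using edges of `S`. -/
noncomputable def numComponents {V E : Type} (src tgt : E → V) (S : Set E) : ℕ :=
  Nat.card (Quot (Reach src tgt S))

/-!
Peel off cycles one at a time. Following positive edges of a non-negative circulation never
gets stuck (conservation gives a positive outgoing edge), so the walk repeats a vertex and the
first repetition closes a simple cycle `C` with `0 ≤ C ≤ f`. Then `f - C` is again a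
non-negative elementary circulation, and `C` cannot occur in its decomposition, since that
would give `2C ≤ f`.

For the bound, elementarity gives every cycle `C` of the decomposition an edge where `f = 1`,
i.e. an edge used by no other cycle. Hence the cycles are linearly independent in the kernel of
the incidence map `ℚ^E → ℚ^V`, whose image contains the `|V| - 1` independent vectors
`δ_a - δ_{v₀}` when the graph is connected; so there are at most `|E| - |V| + 1 = r` of them.
-/

theorem flowContains_iff_of_nonneg {E : Type} {f g : E → ℤ} (hf : ∀ e, 0 ≤ f e) :
    FlowContains f g ↔ ∀ e, 0 ≤ g e ∧ g e ≤ f e := by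
  refine forall_congr' fun e => ?_
  have hfe := hf e
  rw [abs_of_nonneg hfe]
  constructor
  · rintro ⟨hle, hpos⟩
    have hg : 0 ≤ g e := by
      by_contra hneg
      nlinarith [hpos (by omega)]
    exact ⟨hg, by rwa [abs_of_nonneg hg] at hle⟩
  · rintro ⟨hg, hgf⟩
    exact ⟨by rwa [abs_of_nonneg hg], fun hne => mul_pos (by omega) (by omega)⟩

section Flows

variable {V E : Type} [Fintype E] [DecidableEq V] {src tgt : E → V}

theorem isElementary_iff_of_nonneg {f : E → ℤ} (hf : ∀ e, 0 ≤ f e) :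
    IsElementary src tgt f ↔
      ¬ ∃ C, IsUnitCycleFlow src tgt C ∧ ∀ e, 0 ≤ C e ∧ 2 * C e ≤ f e := by
  simp only [IsElementary, flowContains_iff_of_nonneg hf,
    mul_nonneg_iff_of_pos_left (two_pos : (0 : ℤ) < 2)]

theorem IsElementary.mono {f g : E → ℤ} (hf : IsElementary src tgt f) (hg : ∀ e, 0 ≤ g e)
    (hgf : ∀ e, g e ≤ f e) : IsElementary src tgt g := by
  rw [isElementary_iff_of_nonneg fun e => (hg e).trans (hgf e)] at hf
  rw [isElementary_iff_of_nonneg hg]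
  exact fun ⟨C, hC, h⟩ => hf ⟨C, hC, fun e => ⟨(h e).1, (h e).2.trans (hgf e)⟩⟩

theorem isCirculation_iff_sum_filter (f : E → ℤ) :
    IsCirculation src tgt f ↔
      ∀ v, ∑ e ∈ univ.filter (tgt · = v), f e = ∑ e ∈ univ.filter (src · = v), f e := by
  simp only [IsCirculation, Finset.sum_filter]

theorem IsCirculation.sub {f g : E → ℤ} (hf : IsCirculation src tgt f)
    (hg : IsCirculation src tgt g) : IsCirculation src tgt (f - g) := by
  rw [isCirculation_iff_sum_filter] at *
  intro v
  simp only [Pi.sub_apply, Finset.sum_sub_distrib, hf v, hg v]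

end Flows

section EdgeIndicator

variable {E : Type} [DecidableEq E]

def edgeIndicator (S : Finset E) : E → ℤ := fun e => if e ∈ S then 1 else 0

theorem edgeIndicator_ne_zero {S : Finset E} {e : E} : edgeIndicator S e ≠ 0 ↔ e ∈ S := by
  unfold edgeIndicator; split_ifs <;> simp_all

theorem edgeIndicator_nonneg (S : Finset E) (e : E) : 0 ≤ edgeIndicator S e := by
  unfold edgeIndicator; split_ifs <;> simp

theorem filter_edgeIndicator_ne_zero [Fintype E] (S : Finset E) (q : E → Prop)
    [DecidablePred q] :
    univ.filter (fun e => edgeIndicator S e ≠ 0 ∧ q e) = S.filter q := by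
  ext e; simp [edgeIndicator_ne_zero]

theorem sum_ite_edgeIndicator [Fintype E] (S : Finset E) (q : E → Prop) [DecidablePred q] :
    ∑ e, (if q e then edgeIndicator S e else 0) = (S.filter q).card := by
  simp only [edgeIndicator, ← ite_and, Finset.sum_boole, ← filter_edgeIndicator_ne_zero]
  congr 2; ext e; simp [and_comm]

end EdgeIndicator

section ClosedWalk

variable {V E : Type} {src tgt : E → V} {n : ℕ} {w : Fin (n + 1) → E}

theorem Reach.symm {S : Set E} {a b : V} (h : Reach src tgt S a b) : Reach src tgt S b a := by
  have : Std.Symm (EdgeAdj src tgt S) := ⟨fun _ _ ⟨e, he, h⟩ => ⟨e, he, h.symm⟩⟩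
  exact Std.Symm.symm (r := Relation.ReflTransGen (EdgeAdj src tgt S)) _ _ h

theorem card_filter_image_of_injective [DecidableEq E] (hw : Function.Injective w) (q : E → Prop)
    [DecidablePred q] : ((univ.image w).filter q).card = (univ.filter fun k => q (w k)).card := by
  rw [Finset.filter_image, Finset.card_image_of_injective _ hw]

theorem card_filter_tgt_eq_card_filter_src [DecidableEq V]
    (hstep : ∀ k, src (w (k + 1)) = tgt (w k)) (u : V) :
    (univ.filter fun k => tgt (w k) = u).card = (univ.filter fun k => src (w k) = u).card :=
  Finset.card_equiv (Equiv.addRight 1) fun k => by simp [hstep]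

theorem card_filter_src_eq_one [DecidableEq V] (hinj : Function.Injective (src ∘ w))
    (j : Fin (n + 1)) :
    (univ.filter fun k => src (w k) = src (w j)).card = 1 :=
  Finset.card_eq_one.2 ⟨j, by ext k; simpa using hinj.eq_iff (a := k) (b := j)⟩

theorem reach_src_walk (hstep : ∀ k, src (w (k + 1)) = tgt (w k)) {S : Set E}
    (hS : ∀ k, w k ∈ S) (k : Fin (n + 1)) : Reach src tgt S (src (w 0)) (src (w k)) := by
  induction k using Fin.induction with
  | zero => exact Relation.ReflTransGen.refl
  | succ k ih =>
    refine ih.tail ⟨w k.castSucc, hS _, Or.inl ⟨rfl, ?_⟩⟩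
    rw [← hstep, Fin.coeSucc_eq_succ]

theorem isUnitCycleFlow_edgeIndicator_walk [Fintype E] [DecidableEq V] [DecidableEq E]
    (hstep : ∀ k, src (w (k + 1)) = tgt (w k)) (hinj : Function.Injective (src ∘ w)) :
    IsUnitCycleFlow src tgt (edgeIndicator (univ.image w)) := by
  have hw : Function.Injective w := hinj.of_comp
  have hsupp : ∀ k, w k ∈ {e | edgeIndicator (univ.image w) e ≠ 0} := fun k => by
    simp [edgeIndicator_ne_zero]
  have htouch : ∀ u, Touches src tgt {e | edgeIndicator (univ.image w) e ≠ 0} u →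
      ∃ j, src (w j) = u := by
    rintro u ⟨e, he, hu⟩
    obtain ⟨k, -, rfl⟩ := Finset.mem_image.1 (edgeIndicator_ne_zero.1 he)
    exact hu.elim (fun h => ⟨k, h⟩) fun h => ⟨k + 1, (hstep k).trans h⟩
  refine ⟨⟨fun u => ?_, ⟨w 0, hsupp 0⟩, fun a b ha hb => ?_, fun u hu => ?_⟩,
    fun e => ?_⟩
  · simp only [sum_ite_edgeIndicator, card_filter_image_of_injective hw,
      card_filter_tgt_eq_card_filter_src hstep]
  · obtain ⟨i, rfl⟩ := htouch a ha
    obtain ⟨j, rfl⟩ := htouch b hb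
    exact (reach_src_walk hstep hsupp i).symm.trans (reach_src_walk hstep hsupp j)
  · obtain ⟨j, rfl⟩ := htouch u hu
    simp only [suppDegree, filter_edgeIndicator_ne_zero, card_filter_image_of_injective hw,
      card_filter_tgt_eq_card_filter_src hstep, card_filter_src_eq_one hinj]
  · unfold edgeIndicator; split_ifs <;> simp

end ClosedWalk

theorem exists_lt_eq_injOn_Iio {α : Type} (v : ℕ → α) (hv : (Set.range v).Finite) :
    ∃ i n, v (i + n + 1) = v i ∧ Set.InjOn v (Set.Iio (i + n + 1)) := by
  classical
  have hrep : ∃ j, ∃ i < j, v i = v j := by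
    obtain ⟨a, b, hab, h⟩ := hv.exists_lt_map_eq_of_forall_mem (Set.mem_range_self (f := v))
    exact ⟨b, a, hab, h⟩
  obtain ⟨i, hij, hi⟩ := Nat.find_spec hrep
  refine ⟨i, Nat.find hrep - i - 1, ?_, fun a ha b hb hab => ?_⟩
  · rw [show i + (Nat.find hrep - i - 1) + 1 = Nat.find hrep by omega, hi]
  · simp only [Set.mem_Iio] at ha hb
    by_contra hne
    rcases Ne.lt_or_gt hne with hlt | hlt
    · exact Nat.find_min hrep (by omega) ⟨a, hlt, hab⟩
    · exact Nat.find_min hrep (by omega) ⟨b, hlt, hab.symm⟩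

section Decomposition

variable {V E : Type} [Fintype E] [DecidableEq V] {src tgt : E → V} {f : E → ℤ}

theorem IsCirculation.exists_pos_of_tgt (hf : IsCirculation src tgt f) (hnn : ∀ e, 0 ≤ f e)
    {e : E} (he : 0 < f e) : ∃ e', src e' = tgt e ∧ 0 < f e' := by
  by_contra! hout
  have hin : 0 < ∑ e', (if tgt e' = tgt e then f e' else 0) :=
    Finset.sum_pos' (fun e' _ => by split_ifs <;> simp [hnn e']) ⟨e, mem_univ e, by simp [he]⟩
  have hout : ∑ e', (if src e' = tgt e then f e' else 0) ≤ 0 :=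
    Finset.sum_nonpos fun e' _ => by
      split_ifs with h
      exacts [hout e' h, le_rfl]
  linarith [hf (tgt e)]

theorem IsCirculation.exists_unitCycleFlow_le (hf : IsCirculation src tgt f)
    (hnn : ∀ e, 0 ≤ f e) {e₀ : E} (he₀ : 0 < f e₀) :
    ∃ C, IsUnitCycleFlow src tgt C ∧ ∀ e, 0 ≤ C e ∧ C e ≤ f e := by
  classical
  choose next hnext_src hnext_pos using fun e : {e // 0 < f e} => hf.exists_pos_of_tgt hnn e.2
  let step : {e // 0 < f e} → {e // 0 < f e} := fun e => ⟨next e, hnext_pos e⟩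
  let w : ℕ → E := fun k => (step^[k] ⟨e₀, he₀⟩).1
  have hw_step : ∀ k, src (w (k + 1)) = tgt (w k) := fun k => by
    simp only [w, Function.iterate_succ_apply', step, hnext_src]
  have hw_pos : ∀ k, 0 < f (w k) := fun k => (step^[k] ⟨e₀, he₀⟩).2
  obtain ⟨i, n, hrep, hinj⟩ := exists_lt_eq_injOn_Iio (src ∘ w)
    ((Set.finite_range src).subset (Set.range_comp_subset_range w src))
  refine ⟨edgeIndicator (univ.image fun k : Fin (n + 1) => w (i + k)),
    isUnitCycleFlow_edgeIndicator_walk (fun k => ?_) (fun a b hab => ?_),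
    fun e => ⟨edgeIndicator_nonneg _ e, ?_⟩⟩
  · rw [Fin.val_add_one]
    split_ifs with hk
    · simpa [hk, ← hw_step] using hrep.symm
    · exact hw_step (i + k)
  · have := hinj (Set.mem_Iio.2 (by omega)) (Set.mem_Iio.2 (by omega)) hab
    exact Fin.ext (by omega)
  · unfold edgeIndicator
    split_ifs with he
    · obtain ⟨k, -, rfl⟩ := Finset.mem_image.1 he
      exact hw_pos _
    · exact hnn e

theorem exists_unitCycleFlow_decomposition (f : E → ℤ)
    (hf : IsCirculation src tgt f) (hnn : ∀ e, 0 ≤ f e) (helem : IsElementary src tgt f) :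
    ∃ s : Finset (E → ℤ), (∀ C ∈ s, IsUnitCycleFlow src tgt C ∧ ∀ e, 0 ≤ C e) ∧
      ∀ e, f e = ∑ C ∈ s, C e := by
  by_cases hzero : ∃ e, f e ≠ 0
  swap
  · exact ⟨∅, by simp, by simpa using hzero⟩
  obtain ⟨e₀, he₀⟩ := hzero
  obtain ⟨C, hC, hCf⟩ := hf.exists_unitCycleFlow_le hnn (lt_of_le_of_ne (hnn e₀) he₀.symm)
  have hrest_nn : ∀ e, 0 ≤ (f - C) e := fun e => sub_nonneg.2 (hCf e).2
  have hsum_lt : (∑ e, (f - C) e).toNat < (∑ e, f e).toNat := by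
    obtain ⟨e₁, he₁⟩ := hC.1.2.1
    have hC_pos : 0 < ∑ e, C e :=
      Finset.sum_pos' (fun e _ => (hCf e).1)
        ⟨e₁, mem_univ _, lt_of_le_of_ne (hCf e₁).1 he₁.symm⟩
    have hrest : 0 ≤ ∑ e, (f - C) e := Finset.sum_nonneg fun e _ => hrest_nn e
    simp only [Pi.sub_apply, Finset.sum_sub_distrib] at hrest ⊢
    omega
  obtain ⟨s, hs, hsum⟩ := exists_unitCycleFlow_decomposition (f - C) (hf.sub hC.1.1) hrest_nn
    (helem.mono hrest_nn fun e => sub_le_self _ (hCf e).1)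
  have hCs : C ∉ s := by
    intro hCs
    refine (isElementary_iff_of_nonneg hnn).1 helem ⟨C, hC, fun e => ⟨(hCf e).1, ?_⟩⟩
    have hC_le := Finset.single_le_sum (fun D hD => (hs D hD).2 e) hCs
    linarith [hsum e, Pi.sub_apply f C e]
  refine ⟨insert C s, (Finset.forall_mem_insert _ _ _).2 ⟨⟨hC, fun e => (hCf e).1⟩, hs⟩,
    fun e => ?_⟩
  rw [Finset.sum_insert hCs, ← hsum e, Pi.sub_apply, add_sub_cancel]
termination_by (∑ e, f e).toNat
decreasing_by exact hsum_lt

end Decomposition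

theorem exists_private_edge {V E : Type} [Fintype E] [DecidableEq V]
    {src tgt : E → V} {f : E → ℤ} (hnn : ∀ e, 0 ≤ f e) (helem : IsElementary src tgt f)
    {s : Finset (E → ℤ)} (hs : ∀ C ∈ s, IsUnitCycleFlow src tgt C ∧ ∀ e, 0 ≤ C e)
    (hsum : ∀ e, f e = ∑ C ∈ s, C e) {C : E → ℤ} (hC : C ∈ s) :
    ∃ e, C e = 1 ∧ ∀ D ∈ s, D ≠ C → D e = 0 := by
  obtain ⟨hCunit, hCnn⟩ := hs C hC
  obtain ⟨e, he⟩ : ∃ e, f e < 2 * C e := by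
    by_contra! h
    exact (isElementary_iff_of_nonneg hnn).1 helem ⟨C, hCunit, fun e => ⟨hCnn e, h e⟩⟩
  have hrest_nn : ∀ D ∈ s.erase C, 0 ≤ D e := fun D hD =>
    (hs D (Finset.mem_of_mem_erase hD)).2 e
  have hsplit := hsum e
  rw [← Finset.add_sum_erase s _ hC] at hsplit
  have hrest := Finset.sum_nonneg hrest_nn
  have hCe : C e = 1 := by rcases hCunit.2 e with h | h | h <;> omega
  refine ⟨e, hCe, fun D hD hDC => ?_⟩
  exact (Finset.sum_eq_zero_iff_of_nonneg hrest_nn).1 (by omega) D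
    (Finset.mem_erase.2 ⟨hDC, hD⟩)

theorem linearIndependent_of_exists_private_coord {ι X K : Type} [Ring K] [NoZeroDivisors K]
    (v : ι → X → K) (h : ∀ i, ∃ x, v i x ≠ 0 ∧ ∀ j, j ≠ i → v j x = 0) :
    LinearIndependent K v := by
  rw [linearIndependent_iff']
  intro t g hg i hi
  obtain ⟨x, hx, hother⟩ := h i
  have hgx := congrFun hg x
  simp only [Finset.sum_apply, Pi.smul_apply, smul_eq_mul, Pi.zero_apply] at hgx
  rw [Finset.sum_eq_single_of_mem i hi fun j _ hji => by rw [hother j hji, mul_zero]] at hgx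
  exact (mul_eq_zero.1 hgx).resolve_right hx

section Incidence

variable {V E : Type} [Fintype E] [DecidableEq V] (K : Type) [Field K] (src tgt : E → V)

def incidenceMap : (E → K) →ₗ[K] V → K :=
  Fintype.linearCombination K fun e => Pi.single (tgt e) 1 - Pi.single (src e) 1

variable {K src tgt}

theorem IsCirculation.cast_mem_ker {f : E → ℤ} (hf : IsCirculation src tgt f) :
    (fun e => (f e : K)) ∈ LinearMap.ker (incidenceMap K src tgt) := by
  ext v
  have := congrArg (Int.cast : ℤ → K) (hf v)
  push_cast at this
  simp only [incidenceMap, Fintype.linearCombination_apply, Finset.sum_apply, Pi.smul_apply,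
    Pi.sub_apply, Pi.single_apply, smul_eq_mul, mul_sub, mul_ite, mul_one, mul_zero,
    Finset.sum_sub_distrib, @eq_comm _ v, this, sub_self, Pi.zero_apply]

theorem single_tgt_sub_single_src_mem_range (e : E) :
    Pi.single (tgt e) (1 : K) - Pi.single (src e) 1 ∈
      LinearMap.range (incidenceMap K src tgt) := by
  classical
  exact ⟨Pi.single e 1, by
    simp only [incidenceMap, Fintype.linearCombination_apply_single, one_smul]⟩

theorem single_sub_single_mem_range_of_reach {a b : V} (h : Reach src tgt Set.univ a b) :
    Pi.single b (1 : K) - Pi.single a 1 ∈ LinearMap.range (incidenceMap K src tgt) := by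
  induction h with
  | refl => simp
  | @tail c d _ hcd ih =>
    obtain ⟨e, -, ⟨rfl, rfl⟩ | ⟨rfl, rfl⟩⟩ := hcd
    · convert add_mem ih (single_tgt_sub_single_src_mem_range e) using 1
      abel
    · convert sub_mem ih (single_tgt_sub_single_src_mem_range e) using 1
      abel

theorem card_le_finrank_range_incidenceMap_add_one [Fintype V] (hconn : GraphConnected src tgt) :
    Fintype.card V ≤ Module.finrank K (LinearMap.range (incidenceMap K src tgt)) + 1 := by
  rcases isEmpty_or_nonempty V with hV | ⟨⟨v₀⟩⟩
  · simp
  let u : {a // a ≠ v₀} → V → K := fun a => Pi.single a.1 1 - Pi.single v₀ 1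
  have hu : LinearIndependent K u := linearIndependent_of_exists_private_coord u fun a =>
    ⟨a.1, by simp [u, a.2], fun b hba => by simp [u, a.2, Subtype.coe_ne_coe.2 hba]⟩
  have hspan : Submodule.span K (Set.range u) ≤ LinearMap.range (incidenceMap K src tgt) :=
    Submodule.span_le.2 <| Set.range_subset_iff.2 fun a =>
      single_sub_single_mem_range_of_reach (hconn v₀ a)
  have := Submodule.finrank_mono hspan
  rw [finrank_span_eq_card hu, Fintype.card_subtype_compl, Fintype.card_subtype_eq] at this
  omega

theorem finrank_ker_incidenceMap_add_card_le [Fintype V] (hconn : GraphConnected src tgt) :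
    Module.finrank K (LinearMap.ker (incidenceMap K src tgt)) + Fintype.card V ≤
      Fintype.card E + 1 := by
  have := LinearMap.finrank_range_add_finrank_ker (incidenceMap K src tgt)
  rw [Module.finrank_fintype_fun_eq_card] at this
  have := card_le_finrank_range_incidenceMap_add_one (K := K) hconn
  omega

end Incidence

theorem elementary_nonneg_decomposition_general {V E : Type} [Fintype V] [Fintype E]
    [DecidableEq V]
    (src tgt : E → V) (r : ℕ)
    (hconn : GraphConnected src tgt)
    (hrank : Fintype.card E + 1 = Fintype.card V + r)
    (f : E → ℤ) (hf : IsCirculation src tgt f)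
    (hnonneg : ∀ e, 0 ≤ f e)
    (helem : IsElementary src tgt f) :
    ∃ s : Finset (E → ℤ), s.card ≤ r ∧
      (∀ C ∈ s, IsUnitCycleFlow src tgt C ∧ ∀ e, 0 ≤ C e) ∧
      (∀ e, f e = ∑ C ∈ s, C e) := by
  obtain ⟨s, hs, hsum⟩ := exists_unitCycleFlow_decomposition f hf hnonneg helem
  refine ⟨s, ?_, hs, hsum⟩
  let v : s → E → ℚ := fun C e => (C.1 e : ℚ)
  have hv : LinearIndependent ℚ v := linearIndependent_of_exists_private_coord v fun C => by
    obtain ⟨e, hCe, hDe⟩ := exists_private_edge hnonneg helem hs hsum C.2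
    exact ⟨e, by simp [v, hCe],
      fun D hDC => by simp [v, hDe D.1 D.2 (Subtype.coe_ne_coe.2 hDC)]⟩
  have hspan : Submodule.span ℚ (Set.range v) ≤ LinearMap.ker (incidenceMap ℚ src tgt) :=
    Submodule.span_le.2 <| Set.range_subset_iff.2 fun C => (hs C.1 C.2).1.1.1.cast_mem_ker
  have hcard := Submodule.finrank_mono hspan
  rw [finrank_span_eq_card hv, Fintype.card_coe] at hcard
  have := finrank_ker_incidenceMap_add_card_le (K := ℚ) hconn
  omega

/-- A non-negative elementary circulation on a connected graph with cycle rank `r`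
is the sum of at most `r` distinct non-negative unit cycle flows. -/
theorem elementary_nonneg_decomposition {V E : Type} [Fintype V] [Fintype E]
    [DecidableEq V] [DecidableEq E]
    (src tgt : E → V) (r : ℕ)
    (hconn : GraphConnected src tgt)
    (hrank : Fintype.card E + 1 = Fintype.card V + r)
    (f : E → ℤ) (hf : IsCirculation src tgt f)
    (hnonneg : ∀ e, 0 ≤ f e)
    (helem : IsElementary src tgt f) :
    ∃ s : Finset (E → ℤ), s.card ≤ r ∧
      (∀ C ∈ s, IsUnitCycleFlow src tgt C ∧ ∀ e, 0 ≤ C e) ∧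
      (∀ e, f e = ∑ C ∈ s, C e) :=
  elementary_nonneg_decomposition_general src tgt r hconn hrank f hf hnonneg helem
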